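/- Let μ, γ, p, θ, m₀ satisfy p > 2μ, γ ≥ p, θ > 1, m₀ > 0. Suppose a ≥ 0, b, c, I ∈ ℝ satisfy: 𝓜(a) ≥ (1/μ) M(a)·a and b ≤ (1/γ) c (where M is continuous with M(σ) ≥ m₀σ^{θ−1} and 𝓜 its primitive), I = M(a)·a − c, and |I| ≤ c₂ + ((p−2μ)m₀/(4pμ)) a^θ. Then J := (1/2)𝓜(a) − b satisfies J ≥ ((p−2μ)/(4pμ)) m₀ a^θ − c₂. -/
import Mathlib


open MeasureTheory Set

theorem energy_lower_bound
    (M : ℝ → ℝ) (hMcont : ContinuousOn M (Set.Ici 0))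
    (m₀ θ μ γ p c₂ : ℝ) (hm₀ : 0 < m₀) (hθ : 1 < θ)
    (hpμ : p > 2 * μ) (hμ : 1 < μ) (hγp : γ ≥ p)
    (hM1 : ∀ σ ≥ (0:ℝ), M σ ≥ m₀ * σ ^ (θ - 1))
    (a b c I : ℝ) (ha : 0 ≤ a)
    (hM2a : (∫ τ in (0:ℝ)..a, M τ) ≥ (1 / μ) * (M a * a))
    (hbc : b ≤ (1 / γ) * c)
    (hI : I = M a * a - c)
    (hIbound : |I| ≤ c₂ + ((p - 2 * μ) * m₀ / (4 * p * μ)) * a ^ θ) :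
    (1/2) * (∫ τ in (0:ℝ)..a, M τ) - b ≥
      ((p - 2 * μ) / (4 * p * μ)) * m₀ * a ^ θ - c₂ := by
  have hμ0 : 0 < μ := by linarith
  have hp : 0 < p := by linarith
  have hγ : 0 < γ := lt_of_lt_of_le hp hγp
  set S := (∫ τ in (0:ℝ)..a, M τ) with hS
  set T := a ^ θ with hT
  set K := (p - 2 * μ) * m₀ / (4 * p * μ) with hK
  have hTnn : 0 ≤ T := Real.rpow_nonneg ha θ
  -- M a * a ≥ m₀ * T
  have hX : M a * a ≥ m₀ * T := by
    rcases eq_or_lt_of_le ha with h | h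
    · have : T = 0 := by
        rw [hT, ← h, Real.zero_rpow (by linarith)]
      rw [← h, this]; simp
    · have h1 := hM1 a ha
      have h2 : a ^ (θ - 1) * a = T := by
        rw [hT, Real.rpow_sub h, Real.rpow_one]
        field_simp
      calc M a * a ≥ (m₀ * a ^ (θ - 1)) * a :=
            mul_le_mul_of_nonneg_right h1 ha
        _ = m₀ * T := by rw [mul_assoc, h2]
  -- bounds from hIbound
  have habs : -(c₂ + K * T) ≤ I := by
    have := neg_abs_le I
    linarith [hIbound]
  have hnn : 0 ≤ c₂ + K * T := le_trans (abs_nonneg I) hIbound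
  -- coefficient inequality
  have hcoef : (1 / (2 * μ) - 1 / γ) ≥ (p - 2 * μ) / (2 * p * μ) := by
    have h1 : 1 / γ ≤ 1 / p := one_div_le_one_div_of_le hp hγp
    have h2 : (1 / (2 * μ) - 1 / p) = (p - 2 * μ) / (2 * p * μ) := by
      rw [div_sub_div _ _ (by positivity) (by positivity), div_eq_div_iff (by positivity) (by positivity)]
      ring
    linarith
  have hcoefpos : (0:ℝ) ≤ (p - 2 * μ) / (2 * p * μ) := div_nonneg (by linarith) (by positivity)
  have h4 : (1 / (2 * μ) - 1 / γ) * (M a * a) ≥ ((p - 2 * μ) / (2 * p * μ)) * (m₀ * T) := by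
    apply mul_le_mul hcoef hX (by positivity) (le_trans hcoefpos hcoef)
  have h5 : (1 / γ) * I ≥ -(c₂ + K * T) := by
    have h51 : (1 / γ) * I ≥ (1 / γ) * (-(c₂ + K * T)) :=
      mul_le_mul_of_nonneg_left habs (by positivity)
    have h52 : (1 / γ) * (c₂ + K * T) ≤ 1 * (c₂ + K * T) := by
      apply mul_le_mul_of_nonneg_right _ hnn
      rw [div_le_one hγ]; linarith
    nlinarith
  have h2K : (p - 2 * μ) / (2 * p * μ) * m₀ = 2 * K := by
    rw [hK]; field_simp; ring
  -- combine
  have hhalf : (1/2) * S ≥ (1 / (2 * μ)) * (M a * a) := by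
    have := hM2a
    have h : (1 / (2 * μ)) * (M a * a) = (1/2) * ((1/μ) * (M a * a)) := by ring
    rw [h]; linarith
  have hc : c = M a * a - I := by linarith [hI]
  have hgoal : ((p - 2 * μ) / (4 * p * μ)) * m₀ * T = K * T := by
    rw [hK]; ring
  rw [hgoal]
  have : (1/2) * S - b ≥ (1 / (2 * μ)) * (M a * a) - (1 / γ) * (M a * a - I) := by
    have hb : b ≤ (1 / γ) * (M a * a - I) := by rw [← hc]; exact hbc
    linarith
  nlinarith [h4, h5, mul_le_mul_of_nonneg_right (le_of_eq h2K.symm) hTnn]
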